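/- arXiv:math-ph/0511065 — 6 statements merged into one kernel-verified Lean document; each statement's English description precedes it below -/
import Mathlib

section
/- Let F : V → [0,∞) be a convex continuous functional on a real Banach space V with F(0)=0, and let F* be its conjugate on V*. Set D = {x ∈ V : F(x) ≤ 1} and D* = {v ∈ V* : F*(v) ≤ 1}. Then (1/2)D* ⊆ D° ⊆ D*, where D° = {v ∈ V* : v(x) ≤ 1 for all x ∈ D} is the polar of D. -/
open Filter Topology Set
open scoped Pointwise

/-- For a convex continuous `F : V → [0,∞)` with `F 0 = 0`, with
`D = {x | F x ≤ 1}`, `D* = {v | F*(v) ≤ 1}` and `D°` the polar of `D`,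
one has `(1/2) D* ⊆ D° ⊆ D*`. -/
theorem polar_sandwich_of_convex
    {V : Type*} [NormedAddCommGroup V] [NormedSpace ℝ V] [CompleteSpace V]
    (F : V → ℝ)
    (hconv : ConvexOn ℝ Set.univ F)
    (hcont : Continuous F)
    (hnonneg : ∀ x, 0 ≤ F x)
    (hzero : F 0 = 0) :
    ((2 : ℝ)⁻¹ • {v : V →L[ℝ] ℝ | (⨆ x : V, ((v x - F x : ℝ) : EReal)) ≤ 1}
        ⊆ {v : V →L[ℝ] ℝ | ∀ x : V, F x ≤ 1 → v x ≤ 1}) ∧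
    ({v : V →L[ℝ] ℝ | ∀ x : V, F x ≤ 1 → v x ≤ 1}
        ⊆ {v : V →L[ℝ] ℝ | (⨆ x : V, ((v x - F x : ℝ) : EReal)) ≤ 1}) := by
  constructor
  · rintro v hv x hx
    obtain ⟨w, hw, rfl⟩ := hv
    have h1 : ((w x - F x : ℝ) : EReal) ≤ 1 :=
      le_trans (le_iSup (fun x : V => ((w x - F x : ℝ) : EReal)) x) hw
    have h2 : (w x - F x : ℝ) ≤ 1 := by exact_mod_cast h1
    have : w x ≤ 2 := by linarith [hnonneg x]
    simp only [ContinuousLinearMap.smul_apply, smul_eq_mul]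
    linarith
  · intro v hv
    simp only [Set.mem_setOf_eq]; refine iSup_le fun x => ?_
    have key : v x ≤ 1 + F x := by
      by_cases h : F x ≤ 1
      · have := hv x h
        linarith [hnonneg x]
      · push_neg at h
        -- IVT: find t ∈ [0,1] with F (t • x) = 1
        have hc : ContinuousOn (fun t : ℝ => F (t • x)) (Set.Icc 0 1) :=
          (hcont.comp (continuous_id.smul continuous_const)).continuousOn
        have h01 : (0:ℝ) ≤ 1 := zero_le_one
        have hmem : (1:ℝ) ∈ Set.Icc (F ((0:ℝ) • x)) (F ((1:ℝ) • x)) := by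
          constructor
          · simp [hzero]
          · simp; linarith
        obtain ⟨t, ht, htF⟩ := intermediate_value_Icc h01 hc hmem
        have ht0 : 0 < t := by
          rcases lt_or_eq_of_le ht.1 with h' | h'
          · exact h'
          · exfalso; rw [← h'] at htF; simp [hzero] at htF
        have hvt : v (t • x) ≤ 1 := hv _ (le_of_eq htF)
        have hconvx : F (t • x) ≤ t * F x := by
          have := hconv.2 (Set.mem_univ x) (Set.mem_univ (0:V))
            (le_of_lt ht0) (by linarith [ht.2] : (0:ℝ) ≤ 1 - t) (by ring)
          simpa [hzero, smul_zero] using this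
        have htx : 1 ≤ t * F x := by rw [← htF]; exact hconvx
        have hvx : t * v x ≤ 1 := by
          have : v (t • x) = t * v x := by simp
          linarith [this ▸ hvt]
        have hFx1 : 1 / t ≤ F x := by
          rw [div_le_iff₀ ht0] at *
          linarith [mul_comm t (F x) ▸ htx]
        have : v x ≤ 1 / t := by
          rw [le_div_iff₀ ht0]; linarith [mul_comm t (v x) ▸ hvx]
        linarith [hnonneg x]
    exact_mod_cast (by linarith : (v x - F x : ℝ) ≤ 1)
end

section
/- Let φ be a faithful normal state on a von Neumann algebra M and define F_φ on hermitian functionals ω ∈ M_s* by F_φ(ω) = S(ω,φ) if ω is a normal state and +∞ otherwise. Then F_φ is strictly convex on its effective domain S_φ = {normal states ω : S(ω,φ) < ∞}: if ψ₁ ≠ ψ₂ are in S_φ and 0 < λ < 1, then S(λψ₁+(1−λ)ψ₂, φ) < λS(ψ₁,φ) + (1−λ)S(ψ₂,φ). -/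
open Filter Topology

/-- strict convexity of `ω ↦ S(ω, φ)` on its effective domain.
The set of normal states is modelled as a convex subset `state` of the hermitian part of
the predual, and the Araki relative entropy `S` is given abstractly, jointly with its
characteristic properties: nonnegativity, faithfulness (`S ψ ω = 0 ↔ ψ = ω`),
finiteness of `S(ψᵢ, ψ_λ)`, and Donald's identity. -/
theorem relativeEntropy_strictly_convex
    {W : Type*} [NormedAddCommGroup W] [NormedSpace ℝ W]
    (state : Set W) (S : W → W → EReal) (φ : W) (hφ : φ ∈ state)
    (hstate_convex : ∀ ψ₁ ∈ state, ∀ ψ₂ ∈ state, ∀ l : ℝ, 0 ≤ l → l ≤ 1 →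
      l • ψ₁ + (1 - l) • ψ₂ ∈ state)
    (hnonneg : ∀ ψ ∈ state, ∀ ω ∈ state, 0 ≤ S ψ ω)
    (hzero_iff : ∀ ψ ∈ state, ∀ ω ∈ state, (S ψ ω = 0 ↔ ψ = ω))
    (hfin : ∀ ψ₁ ∈ state, ∀ ψ₂ ∈ state, ∀ l : ℝ, 0 < l → l < 1 →
      S ψ₁ (l • ψ₁ + (1 - l) • ψ₂) < ⊤ ∧ S ψ₂ (l • ψ₁ + (1 - l) • ψ₂) < ⊤)
    (hdonald : ∀ ψ₁ ∈ state, ∀ ψ₂ ∈ state, ∀ l : ℝ, 0 < l → l < 1 →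
      S (l • ψ₁ + (1 - l) • ψ₂) φ
          + (l : EReal) * S ψ₁ (l • ψ₁ + (1 - l) • ψ₂)
          + ((1 - l : ℝ) : EReal) * S ψ₂ (l • ψ₁ + (1 - l) • ψ₂)
        = (l : EReal) * S ψ₁ φ + ((1 - l : ℝ) : EReal) * S ψ₂ φ) :
    ∀ ψ₁ ∈ state, ∀ ψ₂ ∈ state, S ψ₁ φ < ⊤ → S ψ₂ φ < ⊤ → ψ₁ ≠ ψ₂ →
      ∀ l : ℝ, 0 < l → l < 1 →
        S (l • ψ₁ + (1 - l) • ψ₂) φ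
          < (l : EReal) * S ψ₁ φ + ((1 - l : ℝ) : EReal) * S ψ₂ φ := by
  intro ψ₁ h₁ ψ₂ h₂ hS1 hS2 hne l hl0 hl1
  set ψl := l • ψ₁ + (1 - l) • ψ₂ with hψl
  have hlst : ψl ∈ state := hstate_convex ψ₁ h₁ ψ₂ h₂ l hl0.le hl1.le
  obtain ⟨hBfin, hCfin⟩ := hfin ψ₁ h₁ ψ₂ h₂ l hl0 hl1
  have hB0 : 0 ≤ S ψ₁ ψl := hnonneg ψ₁ h₁ ψl hlst
  have hC0 : 0 ≤ S ψ₂ ψl := hnonneg ψ₂ h₂ ψl hlst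
  have hA0 : 0 ≤ S ψl φ := hnonneg ψl hlst φ hφ
  have hS10 : 0 ≤ S ψ₁ φ := hnonneg ψ₁ h₁ φ hφ
  have hS20 : 0 ≤ S ψ₂ φ := hnonneg ψ₂ h₂ φ hφ
  -- ψ₁ ≠ ψl
  have hne1 : ψ₁ ≠ ψl := by
    intro h
    apply hne
    have h1l : (1 - l) ≠ 0 := by linarith
    have : (1 - l) • ψ₁ = (1 - l) • ψ₂ := by
      have := h
      rw [hψl] at this
      have h2 : ψ₁ - l • ψ₁ = (1 - l) • ψ₂ := by
        rw [sub_eq_iff_eq_add']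
        simpa [add_comm] using this
      calc (1 - l) • ψ₁ = ψ₁ - l • ψ₁ := by
            rw [sub_smul, one_smul]
        _ = (1 - l) • ψ₂ := h2
    exact smul_right_injective W h1l this
  have hBpos : 0 < S ψ₁ ψl := by
    rcases hB0.lt_or_eq with h | h
    · exact h
    · exact absurd ((hzero_iff ψ₁ h₁ ψl hlst).mp h.symm) hne1
  -- lift to reals
  have hBne : S ψ₁ ψl ≠ ⊥ := fun h => by simp [h] at hB0
  have hCne : S ψ₂ ψl ≠ ⊥ := fun h => by simp [h] at hC0
  have hAne : S ψl φ ≠ ⊥ := fun h => by simp [h] at hA0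
  have hS1ne : S ψ₁ φ ≠ ⊥ := fun h => by simp [h] at hS10
  have hS2ne : S ψ₂ φ ≠ ⊥ := fun h => by simp [h] at hS20
  set b := (S ψ₁ ψl).toReal with hbdef
  set c := (S ψ₂ ψl).toReal with hcdef
  set s₁ := (S ψ₁ φ).toReal with hs1def
  set s₂ := (S ψ₂ φ).toReal with hs2def
  have hb : S ψ₁ ψl = (b : EReal) := (EReal.coe_toReal hBfin.ne hBne).symm
  have hc : S ψ₂ ψl = (c : EReal) := (EReal.coe_toReal hCfin.ne hCne).symm
  have hs1 : S ψ₁ φ = (s₁ : EReal) := (EReal.coe_toReal hS1.ne hS1ne).symm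
  have hs2 : S ψ₂ φ = (s₂ : EReal) := (EReal.coe_toReal hS2.ne hS2ne).symm
  have hbpos : (0 : ℝ) < b := by
    rw [hb] at hBpos; exact_mod_cast hBpos
  have hcnn : (0 : ℝ) ≤ c := by
    rw [hc] at hC0; exact_mod_cast hC0
  have hdon := hdonald ψ₁ h₁ ψ₂ h₂ l hl0 hl1
  rw [← hψl, hb, hc, hs1, hs2] at hdon
  -- show S ψl φ ≠ ⊤
  have hAfin : S ψl φ ≠ ⊤ := by
    intro hA
    rw [hA] at hdon
    have h1 : (⊤ : EReal) + (l : EReal) * (b : EReal) = ⊤ := by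
      rw [← EReal.coe_mul]; exact EReal.top_add_coe _
    have h2 : (⊤ : EReal) + ((1 - l : ℝ) : EReal) * (c : EReal) = ⊤ := by
      rw [← EReal.coe_mul]; exact EReal.top_add_coe _
    rw [h1, h2] at hdon
    have : ((l * s₁ + (1 - l) * s₂ : ℝ) : EReal) = ⊤ := by
      rw [EReal.coe_add, EReal.coe_mul, EReal.coe_mul]; exact hdon.symm
    exact (EReal.coe_ne_top _) this
  set a := (S ψl φ).toReal with hadef
  have ha : S ψl φ = (a : EReal) := (EReal.coe_toReal hAfin hAne).symm
  rw [ha] at hdon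
  have hreal : a + l * b + (1 - l) * c = l * s₁ + (1 - l) * s₂ := by
    have : ((a + l * b + (1 - l) * c : ℝ) : EReal) = ((l * s₁ + (1 - l) * s₂ : ℝ) : EReal) := by
      push_cast
      exact hdon
    exact_mod_cast this
  rw [ha, hs1, hs2, ← EReal.coe_mul, ← EReal.coe_mul, ← EReal.coe_add, EReal.coe_lt_coe_iff]
  nlinarith [mul_pos hl0 hbpos, mul_nonneg (by linarith : (0:ℝ) ≤ 1 - l) hcnn]
end

section
/- Let φ be a faithful normal state on a von Neumann algebra. The Luxemburg norms ‖·‖_{φ,0} (from Φ_{φ,0}) and ‖·‖_φ (from Φ_φ) are equivalent on the subspace M_{s,0} = {h ∈ M_s : φ(h)=0}: for all such h, ‖h‖_{φ,0} ≤ ‖h‖_φ ≤ (2/log 2)·‖h‖_{φ,0}. -/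
private lemma scale_le' {A : Type*} [NormedAddCommGroup A] [NormedSpace ℝ A]
    {c : A → ℝ} (hconv : ConvexOn ℝ Set.univ c) (hc0 : c 0 = 0)
    (x : A) {t : ℝ} (ht0 : 0 ≤ t) (ht1 : t ≤ 1) : c (t • x) ≤ t * c x := by
  have := hconv.2 (Set.mem_univ x) (Set.mem_univ (0 : A)) ht0
    (by linarith : (0:ℝ) ≤ 1 - t) (by ring)
  simpa [hc0, smul_zero] using this

/-- equivalence of the Luxemburg norms `‖·‖_{φ,0}` (from
`Φ_{φ,0}(h) = (c_φ(h)+c_φ(−h))/2`) and `‖·‖_φ` (from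
`Φ_φ(h) = (e^{c_φ(h)}+e^{c_φ(−h)})/2 − 1`) on the centered subspace `{h | φ(h)=0}`:
`‖h‖_{φ,0} ≤ ‖h‖_φ ≤ (2/log 2) ‖h‖_{φ,0}`.  The needed facts about `c_φ`
(nonnegativity on centered elements, convexity, `c_φ(0)=0`) are hypotheses. -/
theorem centered_norms_equivalent
    {A : Type*} [NormedAddCommGroup A] [NormedSpace ℝ A]
    (φ : A →L[ℝ] ℝ) (c : A → ℝ)
    (hpos : ∀ h : A, φ h = 0 → 0 ≤ c h)
    (hconv : ConvexOn ℝ Set.univ c)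
    (hc0 : c 0 = 0) :
    ∀ h : A, φ h = 0 →
      sInf {ρ : ℝ | 0 < ρ ∧ (c (ρ⁻¹ • h) + c (-(ρ⁻¹ • h))) / 2 ≤ 1}
          ≤ sInf {ρ : ℝ | 0 < ρ ∧
              (Real.exp (c (ρ⁻¹ • h)) + Real.exp (c (-(ρ⁻¹ • h)))) / 2 - 1 ≤ 1} ∧
        sInf {ρ : ℝ | 0 < ρ ∧
              (Real.exp (c (ρ⁻¹ • h)) + Real.exp (c (-(ρ⁻¹ • h)))) / 2 - 1 ≤ 1}
          ≤ (2 / Real.log 2) *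
            sInf {ρ : ℝ | 0 < ρ ∧ (c (ρ⁻¹ • h) + c (-(ρ⁻¹ • h))) / 2 ≤ 1} := by
  intro h hφ
  set L := Real.log 2 with hLdef
  have hLpos : 0 < L := Real.log_pos one_lt_two
  have hL1 : L < 1 := by
    have := Real.log_two_lt_d9; rw [hLdef]; linarith
  set S0 := {ρ : ℝ | 0 < ρ ∧ (c (ρ⁻¹ • h) + c (-(ρ⁻¹ • h))) / 2 ≤ 1} with hS0def
  set S := {ρ : ℝ | 0 < ρ ∧
      (Real.exp (c (ρ⁻¹ • h)) + Real.exp (c (-(ρ⁻¹ • h)))) / 2 - 1 ≤ 1} with hSdef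
  -- nonnegativity of c on multiples of h
  have hφs : ∀ t : ℝ, φ (t • h) = 0 := fun t => by simp [hφ]
  have hcp : ∀ t : ℝ, 0 ≤ c (t • h) := fun t => hpos _ (hφs t)
  have hcn : ∀ t : ℝ, 0 ≤ c (-(t • h)) := fun t => by
    have : -(t • h) = (-t) • h := by rw [neg_smul]
    rw [this]; exact hcp (-t)
  -- bounded below
  have hbdd0 : BddBelow S0 := ⟨0, fun ρ hρ => le_of_lt hρ.1⟩
  have hbddS : BddBelow S := ⟨0, fun ρ hρ => le_of_lt hρ.1⟩
  -- membership criterion for S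
  have hmemS : ∀ ρ : ℝ, 0 < ρ → c (ρ⁻¹ • h) ≤ L → c (-(ρ⁻¹ • h)) ≤ L → ρ ∈ S := by
    intro ρ hρ h1 h2
    have e1 : Real.exp (c (ρ⁻¹ • h)) ≤ 2 := by
      calc Real.exp (c (ρ⁻¹ • h)) ≤ Real.exp L := Real.exp_le_exp.2 h1
        _ = 2 := Real.exp_log two_pos
    have e2 : Real.exp (c (-(ρ⁻¹ • h))) ≤ 2 := by
      calc Real.exp (c (-(ρ⁻¹ • h))) ≤ Real.exp L := Real.exp_le_exp.2 h2
        _ = 2 := Real.exp_log two_pos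
    exact ⟨hρ, by linarith⟩
  -- S is nonempty
  have hch : 0 ≤ c h := by have := hcp 1; rwa [one_smul] at this
  have hcnh : 0 ≤ c (-h) := by have := hcn 1; rwa [one_smul] at this
  have hSne : S.Nonempty := by
    obtain ⟨D, hDeq⟩ : ∃ D : ℝ, D = c h + c (-h) + 1 := ⟨_, rfl⟩
    have hD1 : 1 ≤ D := by rw [hDeq]; linarith
    have hDpos : 0 < D := by linarith
    have ht0 : (0:ℝ) ≤ (D / L)⁻¹ := by positivity
    have ht1 : (D / L)⁻¹ ≤ 1 := by
      rw [inv_le_one_iff₀]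
      right
      rw [le_div_iff₀ hLpos]
      nlinarith
    refine ⟨D / L, hmemS _ (div_pos hDpos hLpos) ?_ ?_⟩
    · have := scale_le' hconv hc0 h ht0 ht1
      have hle : (D / L)⁻¹ * c h ≤ L := by
        rw [inv_div, div_mul_eq_mul_div, div_le_iff₀ hDpos]
        nlinarith
      linarith
    · have heq : -((D / L)⁻¹ • h) = (D / L)⁻¹ • (-h) := by rw [smul_neg]
      rw [heq]
      have := scale_le' hconv hc0 (-h) ht0 ht1
      have hle : (D / L)⁻¹ * c (-h) ≤ L := by
        rw [inv_div, div_mul_eq_mul_div, div_le_iff₀ hDpos]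
        nlinarith
      linarith
  -- S ⊆ S0
  have hsub : S ⊆ S0 := by
    intro ρ hρ
    obtain ⟨hρ0, hΦ⟩ := hρ
    refine ⟨hρ0, ?_⟩
    have a1 := Real.add_one_le_exp (c (ρ⁻¹ • h))
    have a2 := Real.add_one_le_exp (c (-(ρ⁻¹ • h)))
    linarith
  have hS0ne : S0.Nonempty := hSne.mono hsub
  constructor
  · exact csInf_le_csInf hbdd0 hSne hsub
  · -- second inequality
    set K : ℝ := 2 / L with hK
    have hKpos : 0 < K := by positivity
    have hscaled : ∀ ρ ∈ S0, K * ρ ∈ S := by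
      intro ρ hρ
      obtain ⟨hρ0, hΦ0⟩ := hρ
      have hx1 : 0 ≤ c (ρ⁻¹ • h) := hcp _
      have hx2 : 0 ≤ c (-(ρ⁻¹ • h)) := hcn _
      have hb1 : c (ρ⁻¹ • h) ≤ 2 := by linarith
      have hb2 : c (-(ρ⁻¹ • h)) ≤ 2 := by linarith
      have hKi : K⁻¹ = L / 2 := by rw [hK, inv_div]
      have ht0 : (0:ℝ) ≤ K⁻¹ := le_of_lt (inv_pos.2 hKpos)
      have ht1 : K⁻¹ ≤ 1 := by rw [hKi]; linarith
      have heq : (K * ρ)⁻¹ • h = K⁻¹ • (ρ⁻¹ • h) := by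
        rw [mul_inv, smul_smul]
      have heq2 : -((K * ρ)⁻¹ • h) = K⁻¹ • (-(ρ⁻¹ • h)) := by
        rw [heq, smul_neg]
      refine hmemS _ (by positivity) ?_ ?_
      · rw [heq]
        have := scale_le' hconv hc0 (ρ⁻¹ • h) ht0 ht1
        have : K⁻¹ * c (ρ⁻¹ • h) ≤ L := by rw [hKi]; nlinarith
        linarith [scale_le' hconv hc0 (ρ⁻¹ • h) ht0 ht1]
      · rw [heq2]
        have : K⁻¹ * c (-(ρ⁻¹ • h)) ≤ L := by rw [hKi]; nlinarith
        linarith [scale_le' hconv hc0 (-(ρ⁻¹ • h)) ht0 ht1]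
    have hlow : sInf S / K ≤ sInf S0 := by
      apply le_csInf hS0ne
      intro ρ hρ
      rw [div_le_iff₀ hKpos]
      have := csInf_le hbddS (hscaled ρ hρ)
      linarith [mul_comm K ρ]
    calc sInf S = (sInf S / K) * K := by field_simp
      _ ≤ sInf S0 * K := by nlinarith
      _ = K * sInf S0 := mul_comm _ _
end

section
/- Abstract version of the norm-to-relative-entropy bound: let Φ be a Young function on a Banach space V and suppose ω ∈ V* and x ∈ V satisfy Φ(y) ≥ cosh(ω(y))·e^{−S} − 1 for all y ∈ V, where S ≥ 0 is a constant. If ‖x‖_Φ = t > 0 then cosh(ω(x)/t) ≤ 2 e^{S}; consequently |ω(x)| ≤ t·arccosh(2e^{S}). -/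
open Filter Topology

/-! Lower semicontinuity of `Φ` makes `ρ ↦ Φ (ρ⁻¹ • x)` lower semicontinuous at the Luxemburg
norm `t > 0` of `x`, and `t` is a limit of radii `ρ` with `Φ (ρ⁻¹ • x) ≤ 1`; hence
`Φ (t⁻¹ • x) ≤ 1`. The hypothesis on `ω` at `y = t⁻¹ • x` then reads
`cosh (ω x / t) e^{-S} - 1 ≤ 1`, and the bound on `|ω x|` follows by inverting `cosh` on `[0, ∞)`. -/

noncomputable def Real.arcoshLog (y : ℝ) : ℝ := Real.log (y + Real.sqrt (y ^ 2 - 1))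

namespace Real

theorem arcoshLog_eq_arcosh : arcoshLog = arcosh := rfl

theorem abs_le_arcosh_of_cosh_le {u y : ℝ} (h : cosh u ≤ y) : |u| ≤ arcosh y := by
  rw [← arcosh_cosh (abs_nonneg u), cosh_abs]
  exact (arcosh_le_arcosh (cosh_pos u) ((cosh_pos u).trans_le h)).2 h

end Real

section Luxemburg

variable {V : Type*} [AddCommGroup V] [Module ℝ V] [TopologicalSpace V] [ContinuousSMul ℝ V]

noncomputable def luxemburgNorm (Φ : V → EReal) (x : V) : ℝ :=
  sInf {ρ : ℝ | 0 < ρ ∧ Φ (ρ⁻¹ • x) ≤ 1}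

theorem LowerSemicontinuous.apply_inv_luxemburgNorm_smul_le_one {Φ : V → EReal}
    (hΦ : LowerSemicontinuous Φ) {x : V} (hx : 0 < luxemburgNorm Φ x) :
    Φ ((luxemburgNorm Φ x)⁻¹ • x) ≤ 1 := by
  set s := {ρ : ℝ | 0 < ρ ∧ Φ (ρ⁻¹ • x) ≤ 1}
  have hs : s.Nonempty := Set.nonempty_iff_ne_empty.2 fun h => by
    simp [luxemburgNorm, s, h] at hx
  have hclosure : luxemburgNorm Φ x ∈ closure s := csInf_mem_closure hs ⟨0, fun ρ hρ => hρ.1.le⟩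
  have hlsc : LowerSemicontinuousAt (fun ρ : ℝ => Φ (ρ⁻¹ • x)) (luxemburgNorm Φ x) :=
    (hΦ _).comp (g := fun ρ : ℝ => ρ⁻¹ • x) ((continuousAt_inv₀ hx.ne').smul continuousAt_const)
  by_contra! h
  obtain ⟨ρ, hρ_gt, hρ_mem⟩ :=
    ((hlsc 1 h).and_frequently (mem_closure_iff_frequently.1 hclosure)).exists
  exact hρ_gt.not_ge hρ_mem.2

end Luxemburg

theorem entropy_ball_equicontinuous_general
    {V : Type*} [NormedAddCommGroup V] [NormedSpace ℝ V]
    (Φ : V → EReal)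
    (hlsc : LowerSemicontinuous Φ)
    (ω : V →L[ℝ] ℝ) (S : ℝ)
    (hbound : ∀ y : V, ((Real.cosh (ω y) * Real.exp (-S) - 1 : ℝ) : EReal) ≤ Φ y)
    (x : V) (t : ℝ) (htpos : 0 < t)
    (ht : sInf {ρ : ℝ | 0 < ρ ∧ Φ (ρ⁻¹ • x) ≤ 1} = t) :
    Real.cosh (ω x / t) ≤ 2 * Real.exp S ∧
    |ω x| ≤ t * Real.arcoshLog (2 * Real.exp S) := by
  change luxemburgNorm Φ x = t at ht
  have hunit : Φ (t⁻¹ • x) ≤ 1 := ht ▸ hlsc.apply_inv_luxemburgNorm_smul_le_one (ht ▸ htpos)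
  have hcosh : Real.cosh (ω x / t) ≤ 2 * Real.exp S := by
    have h := (hbound _).trans hunit
    rwa [map_smul, smul_eq_mul, inv_mul_eq_div, ← EReal.coe_one, EReal.coe_le_coe_iff,
      Real.exp_neg, sub_le_iff_le_add, one_add_one_eq_two, mul_inv_le_iff₀ (Real.exp_pos S)] at h
  refine ⟨hcosh, ?_⟩
  calc |ω x| = t * |ω x / t| := by
        rw [abs_div, abs_of_pos htpos, mul_div_cancel₀ _ htpos.ne']
    _ ≤ t * Real.arcoshLog (2 * Real.exp S) := by
        rw [Real.arcoshLog_eq_arcosh]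
        gcongr
        exact Real.abs_le_arcosh_of_cosh_le hcosh

/-- abstract norm-to-relative-entropy bound: if a Young function `Φ` on a
Banach space `V` dominates `y ↦ cosh(ω(y)) e^{−S} − 1` for a functional `ω` and a
constant `S ≥ 0`, and `x` has Luxemburg norm `t > 0`, then `cosh(ω(x)/t) ≤ 2 e^S` and
consequently `|ω(x)| ≤ t · arcosh(2 e^S)`. -/
theorem entropy_ball_equicontinuous
    {V : Type*} [NormedAddCommGroup V] [NormedSpace ℝ V] [CompleteSpace V]
    (Φ : V → EReal)
    (hconv : ∀ x y : V, ∀ a b : ℝ, 0 ≤ a → 0 ≤ b → a + b = 1 →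
      Φ (a • x + b • y) ≤ (a : EReal) * Φ x + (b : EReal) * Φ y)
    (hlsc : LowerSemicontinuous Φ)
    (hnonneg : ∀ x, 0 ≤ Φ x)
    (hzero : Φ 0 = 0)
    (heven : ∀ x, Φ (-x) = Φ x)
    (htop : ∀ x : V, x ≠ 0 → Tendsto (fun t : ℝ => Φ (t • x)) atTop (𝓝 (⊤ : EReal)))
    (ω : V →L[ℝ] ℝ) (S : ℝ) (hS : 0 ≤ S)
    (hbound : ∀ y : V, ((Real.cosh (ω y) * Real.exp (-S) - 1 : ℝ) : EReal) ≤ Φ y)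
    (x : V) (t : ℝ) (htpos : 0 < t)
    (ht : sInf {ρ : ℝ | 0 < ρ ∧ Φ (ρ⁻¹ • x) ≤ 1} = t) :
    Real.cosh (ω x / t) ≤ 2 * Real.exp S ∧
    |ω x| ≤ t * Real.arcoshLog (2 * Real.exp S) :=
  entropy_ball_equicontinuous_general Φ hlsc ω S hbound x t htpos ht
end

section
/- Let φ be a faithful normal state and suppose h ∈ B_φ satisfies [φ^h] = φ (the perturbed state equals φ). Then h is a scalar: h = φ(h)·1. More generally, if [φ^h] = [φ^k] for h, k ∈ B_φ, then h − k = φ(h−k)·1. -/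
/-!
If `[ψ^g] = ψ`, the chain rule gives `c_ψ(g + k) = c_ψ(k) + c_ψ(g)`, so `t ↦ c_ψ(t • g)` is a
convex function on `ℝ` that grows by `c_ψ(g)` at every unit step, hence is linear. Then
`c_ψ(t • (g - c_ψ(g) • 1)) = 0` for all `t`, and the separation property of the Orlicz norm forces
`g = c_ψ(g) • 1`. For `[φ^h] = [φ^k]` apply this to `ψ = [φ^k]` and `g = h - k`; the scalar is
read off with `φ(1) = 1`, which follows from `φ ≤ c_φ`.
-/

open Set

section UnitStep

variable {f : ℝ → ℝ} {a : ℝ}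

theorem map_add_intCast_of_map_add_one (hf : ∀ t, f (t + 1) = f t + a) (n : ℤ) (t : ℝ) :
    f (t + n) = f t + n * a := by
  induction n using Int.induction_on generalizing t with
  | zero => simp
  | succ n ih => rw [Int.cast_add, Int.cast_one, ← add_assoc, hf, ih]; ring
  | pred n ih =>
    have h := hf (t + ((-n - 1 : ℤ) : ℝ))
    rw [show t + ((-n - 1 : ℤ) : ℝ) + 1 = t + ((-n : ℤ) : ℝ) by push_cast; ring, ih] at h
    push_cast at h ⊢
    linarith

namespace ConvexOn

theorem le_of_map_add_one (hconv : ConvexOn ℝ univ f) (hf : ∀ t, f (t + 1) = f t + a)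
    (t : ℝ) : f t ≤ f 0 + a * t := by
  have hfract : f (Int.fract t) ≤ f 0 + a * Int.fract t := by
    have h := hconv.2 (mem_univ 0) (mem_univ 1) (sub_nonneg.2 (Int.fract_lt_one t).le)
      (Int.fract_nonneg t) (sub_add_cancel 1 _)
    have h1 := hf 0
    simp only [smul_eq_mul, mul_zero, mul_one, zero_add] at h h1
    rw [h1] at h
    linarith
  calc f t = f (Int.fract t + ⌊t⌋) := by rw [Int.fract_add_floor]
    _ = f (Int.fract t) + ⌊t⌋ * a := map_add_intCast_of_map_add_one hf _ _
    _ ≤ f 0 + a * (Int.fract t + ⌊t⌋) := by linarith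
    _ = f 0 + a * t := by rw [Int.fract_add_floor]

theorem eq_of_map_add_one (hconv : ConvexOn ℝ univ f) (hf : ∀ t, f (t + 1) = f t + a)
    (t : ℝ) : f t = f 0 + a * t := by
  refine (hconv.le_of_map_add_one hf t).antisymm ?_
  have hmid := hconv.2 (mem_univ t) (mem_univ (-t)) (by norm_num : (0 : ℝ) ≤ 1 / 2)
    (by norm_num : (0 : ℝ) ≤ 1 / 2) (by norm_num)
  have hneg := hconv.le_of_map_add_one hf (-t)
  simp only [smul_eq_mul] at hmid
  rw [show 1 / 2 * t + 1 / 2 * -t = 0 by ring] at hmid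
  linarith

end ConvexOn

end UnitStep

section Translation

variable {B : Type*} [AddCommGroup B] [Module ℝ B] {one : B} {c : B → ℝ}

theorem eq_smul_one_of_map_add_eq (hconv : ConvexOn ℝ univ c) (hc0 : c 0 = 0)
    (hscalar : ∀ h : B, ∀ l : ℝ, c (h + l • one) = c h + l)
    (hsep : ∀ k : B, (∀ t : ℝ, c (t • k) = 0) → k = 0)
    {g : B} (hg : ∀ k, c (g + k) = c k + c g) : g = c g • one := by
  have hline : ∀ t : ℝ, c (t • g) = c g * t := by
    have hconv' : ConvexOn ℝ univ (fun t : ℝ => c (t • g)) := by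
      exact hconv.comp_linearMap (LinearMap.toSpanSingleton ℝ B g)
    intro t
    simpa [hc0] using hconv'.eq_of_map_add_one
      (fun s => by rw [add_smul, one_smul, add_comm, hg]) t
  rw [← sub_eq_zero]
  refine hsep _ fun t => ?_
  calc c (t • (g - c g • one)) = c (t • g + (-(t * c g)) • one) := by congr 1; module
    _ = 0 := by rw [hscalar, hline]; ring

theorem map_one_eq_one_of_le {E : Type*} [FunLike E B ℝ] [AddMonoidHomClass E B ℝ] {ψ : E}
    (hc0 : c 0 = 0) (hscalar : ∀ h : B, ∀ l : ℝ, c (h + l • one) = c h + l)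
    (hlower : ∀ h : B, ψ h ≤ c h) : ψ one = 1 := by
  have hc : ∀ l : ℝ, c (l • one) = l := fun l => by simpa [hc0] using hscalar 0 l
  have hle := hlower ((1 : ℝ) • one)
  have hge := hlower ((-1 : ℝ) • one)
  rw [hc, one_smul] at hle
  rw [hc, neg_one_smul, map_neg] at hge
  linarith

end Translation

/-- `B` models the Orlicz space `B_φ` with unit `one`, `F` the faithful normal states,
`pert ψ h = [ψ^h]` and `c ψ h = c_ψ(h)`. -/
theorem perturbation_injective_general
    {B : Type*} [NormedAddCommGroup B] [NormedSpace ℝ B]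
    (one : B) (F : Set (B →L[ℝ] ℝ)) (φ : B →L[ℝ] ℝ) (hφF : φ ∈ F)
    (pert : (B →L[ℝ] ℝ) → B → (B →L[ℝ] ℝ))
    (c : (B →L[ℝ] ℝ) → B → ℝ)
    (hmem : ∀ ψ ∈ F, ∀ h : B, pert ψ h ∈ F)
    (hc0 : ∀ ψ ∈ F, c ψ 0 = 0)
    (hchain : ∀ ψ ∈ F, ∀ h k : B,
      pert ψ (h + k) = pert (pert ψ h) k ∧ c ψ (h + k) = c (pert ψ h) k + c ψ h)
    (hscalar : ∀ ψ ∈ F, ∀ h : B, ∀ l : ℝ, c ψ (h + l • one) = c ψ h + l)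
    (hlower : ∀ ψ ∈ F, ∀ h : B, ψ h ≤ c ψ h)
    (hconv : ∀ ψ ∈ F, ConvexOn ℝ Set.univ (c ψ))
    (hsep : ∀ ψ ∈ F, ∀ k : B, (∀ t : ℝ, c ψ (t • k) = 0) → k = 0) :
    (∀ h : B, pert φ h = φ → h = φ h • one) ∧
    (∀ h k : B, pert φ h = pert φ k → h - k = φ (h - k) • one) := by
  have hfixed : ∀ ψ ∈ F, ∀ g : B, pert ψ g = ψ → g = c ψ g • one := fun ψ hψ g hg =>
    eq_smul_one_of_map_add_eq (hconv ψ hψ) (hc0 ψ hψ) (hscalar ψ hψ) (hsep ψ hψ)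
      fun k => by rw [(hchain ψ hψ g k).2, hg]
  have hφone : φ one = 1 := map_one_eq_one_of_le (hc0 φ hφF) (hscalar φ hφF) (hlower φ hφF)
  have hscal : ∀ (x : B) (a : ℝ), x = a • one → x = φ x • one := by
    rintro x a rfl
    rw [map_smul, smul_eq_mul, hφone, mul_one]
  refine ⟨fun h hh => hscal _ _ (hfixed φ hφF h hh), fun h k hhk => ?_⟩
  refine hscal _ _ (hfixed _ (hmem φ hφF k) _ ?_)
  rw [← (hchain φ hφF k (h - k)).1, add_sub_cancel, hhk]

/-- if the perturbed state satisfies `[φ^h] = φ` then `h = φ(h)·1`, and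
more generally `[φ^h] = [φ^k]` implies `h − k = φ(h−k)·1`.  The Orlicz space `B_φ` is
modelled abstractly as a Banach space `B` with a distinguished unit `one`; `F` is the
set of faithful normal states (as functionals on `B`), `pert ψ h = [ψ^h]`, and
`c ψ h = c_ψ(h)`.  The chain rule, the scalar translation rule `c_ψ(h+λ1)=c_ψ(h)+λ`,
the bound `ψ(h) ≤ c_ψ(h)`, convexity of `c_ψ`, and the separation property of the
Orlicz norm (`c_ψ(t k) = 0` for all `t` implies `k = 0`) are hypotheses. -/
theorem perturbation_injective
    {B : Type*} [NormedAddCommGroup B] [NormedSpace ℝ B]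
    (one : B) (F : Set (B →L[ℝ] ℝ)) (φ : B →L[ℝ] ℝ) (hφF : φ ∈ F)
    (pert : (B →L[ℝ] ℝ) → B → (B →L[ℝ] ℝ))
    (c : (B →L[ℝ] ℝ) → B → ℝ)
    (hmem : ∀ ψ ∈ F, ∀ h : B, pert ψ h ∈ F)
    (hpert0 : ∀ ψ ∈ F, pert ψ 0 = ψ)
    (hc0 : ∀ ψ ∈ F, c ψ 0 = 0)
    (hchain : ∀ ψ ∈ F, ∀ h k : B,
      pert ψ (h + k) = pert (pert ψ h) k ∧ c ψ (h + k) = c (pert ψ h) k + c ψ h)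
    (hscalar : ∀ ψ ∈ F, ∀ h : B, ∀ l : ℝ, c ψ (h + l • one) = c ψ h + l)
    (hlower : ∀ ψ ∈ F, ∀ h : B, ψ h ≤ c ψ h)
    (hconv : ∀ ψ ∈ F, ConvexOn ℝ Set.univ (c ψ))
    (hsep : ∀ ψ ∈ F, ∀ k : B, (∀ t : ℝ, c ψ (t • k) = 0) → k = 0) :
    (∀ h : B, pert φ h = φ → h = φ h • one) ∧
    (∀ h k : B, pert φ h = pert φ k → h - k = φ (h - k) • one) :=
  perturbation_injective_general one F φ hφF pert c hmem hc0 hchain hscalar hlower hconv hsep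
end

section
/- Let φ be a faithful normal state and c̄_φ the restriction of c_φ to B_{φ,0} = {h ∈ B_φ : φ(h) = 0}. Then c̄_φ is strictly convex: if h ≠ k in B_{φ,0} and 0 < λ < 1, then c̄_φ(λh + (1−λ)k) < λ c̄_φ(h) + (1−λ) c̄_φ(k). -/
/-- strict convexity of the cumulant functional `c̄_φ` on the centered
space `B_{φ,0}`.  Here `Sphi` is the set of finite-entropy normal states (as functionals
on `B_φ`), `S ω = S(ω,φ)` their relative entropies, `c h = c_φ(h)` the cumulant, and
`pert h = [φ^h]` the unique maximizer of `ω ↦ ω(h) − S(ω,φ)`; uniqueness of the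
maximizer and injectivity of `h ↦ [φ^h]` on centered elements are hypotheses. -/
theorem cumulant_strictly_convex
    {B : Type*} [NormedAddCommGroup B] [NormedSpace ℝ B]
    (Sphi : Set (B →L[ℝ] ℝ)) (S : (B →L[ℝ] ℝ) → ℝ) (φ : B →L[ℝ] ℝ)
    (c : B → ℝ) (pert : B → (B →L[ℝ] ℝ))
    (hpert_mem : ∀ h : B, pert h ∈ Sphi)
    (hub : ∀ h : B, ∀ ω ∈ Sphi, ω h - S ω ≤ c h)
    (hattain : ∀ h : B, pert h h - S (pert h) = c h)
    (huniq_max : ∀ h : B, ∀ ω ∈ Sphi, ω h - S ω = c h → ω = pert h)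
    (huniq : ∀ h k : B, pert h = pert k → φ h = 0 → φ k = 0 → h = k) :
    ∀ h k : B, φ h = 0 → φ k = 0 → h ≠ k → ∀ l : ℝ, 0 < l → l < 1 →
      c (l • h + (1 - l) • k) < l * c h + (1 - l) * c k := by
  intro h k hφh hφk hne l hl0 hl1
  set m := l • h + (1 - l) • k with hm
  set ω := pert m with hω
  have hωmem := hpert_mem m
  have hcm : ω m - S ω = c m := hattain m
  have hωm : ω m = l * ω h + (1 - l) * ω k := by
    simp [hm, map_add, map_smul, smul_eq_mul]
  have hbh : ω h - S ω ≤ c h := hub h ω hωmem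
  have hbk : ω k - S ω ≤ c k := hub k ω hωmem
  rcases lt_or_eq_of_le hbh with hlt | heq
  · have : c m < l * c h + (1 - l) * c k := by nlinarith
    exact this
  rcases lt_or_eq_of_le hbk with hlt | heq'
  · have : c m < l * c h + (1 - l) * c k := by nlinarith
    exact this
  exfalso
  have h1 : ω = pert h := huniq_max h ω hωmem heq
  have h2 : ω = pert k := huniq_max k ω hωmem heq'
  exact hne (huniq h k (h1 ▸ h2) hφh hφk)
end
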